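/- arXiv:1405.4816 — 3 statements merged into one kernel-verified Lean document; each statement's English description precedes it below -/
import Mathlib

section
/- Let $F$ be a field and $n, u$ positive integers with $x^n - u$ irreducible over $\mathbb{Q}$. Let $(\ )^*$ be the $F$-endomorphism of $F[x_0,\dots,x_{n-1}]$ with $x_i^* = x_{i+1}$ for $0 \le i < n-1$ and $x_{n-1}^* = x_0^u$. For $f, g$ with $d(g) > 0$, define $f \circ g = f(g, g^*, \dots, g^{(n-1)*})$. Then $d(f \circ g) = d(f) \cdot d(g)$ for all nonzero $f \in F[x_0,\dots,x_{n-1}]$ and all $g \in F[x_0,\dots,x_{n-1}]$ with $d(g) > 0$. -/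
open MvPolynomial

noncomputable section

def wdeg (n u : ℕ) (e : Fin n →₀ ℕ) : ℝ :=
  ∑ i : Fin n, (e i : ℝ) * (u : ℝ) ^ (((i : ℕ) : ℝ) / (n : ℝ))

/-- The `ℤ[u^{1/n}]`-valued degree `d(f)` (as a real number): the maximum weighted degree of the
terms of `f` (junk value `0` for `f = 0`). -/
def dmax {F : Type*} [Field F] (n u : ℕ) (f : MvPolynomial (Fin n) F) : ℝ :=
  if h : f.support.Nonempty then f.support.sup' h (wdeg n u) else 0

/-- The star endomorphism of `F[x₀,…,x_{n-1}]`: `xᵢ* = x_{i+1}` for `i < n-1`, `x_{n-1}* = x₀^u`. -/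
def starP (F : Type*) [Field F] (n u : ℕ) :
    MvPolynomial (Fin n) F →ₐ[F] MvPolynomial (Fin n) F :=
  MvPolynomial.aeval (fun i : Fin n =>
    if h : (i : ℕ) + 1 < n then X (⟨(i : ℕ) + 1, h⟩ : Fin n)
    else X (⟨0, i.pos⟩ : Fin n) ^ u)

/-- The composition `f ∘ g = f(g, g*, …, g^{(n-1)*})` for multivariate polynomials. -/
def pcompP {F : Type*} [Field F] (n u : ℕ) (f g : MvPolynomial (Fin n) F) :
    MvPolynomial (Fin n) F :=
  MvPolynomial.aeval (fun i : Fin n => (⇑(starP F n u))^[(i : ℕ)] g) f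


/-!
Give `xᵢ` the weight `θ^i` with `θ = u^{1/n}`, so that `d` is the maximal weight of a monomial.
Since `X^n - u` is the minimal polynomial of `θ`, the powers `1, θ, …, θ^{n-1}` are linearly
independent over `ℚ`, so distinct monomials have distinct weights. Hence every nonzero
polynomial has a unique monomial of top weight, and top monomials multiply: `d(pq) = d(p) + d(q)`.
The substitution `xᵢ ↦ xᵢ*` multiplies the weight of each variable by `θ` (for `x_{n-1}* = x₀^u`
because `θ^n = u`), so `d(g^{i*}) = θ^i d(g)`. Substituting `g^{i*}` for `xᵢ` in a monomial `x^e`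
thus produces top weight `d(g)·wt(e)`; as `d(g) > 0` these are again distinct, and the term
coming from the top monomial of `f` dominates.
-/

theorem Finsupp.weight_smul {σ M : Type*} [CommSemiring M] (c : M) (w : σ → M) (e : σ →₀ ℕ) :
    weight (c • w) e = c * weight w e := by
  simp only [weight_apply, Finsupp.mul_sum, Pi.smul_apply, smul_eq_mul, nsmul_eq_mul]
  exact Finsupp.sum_congr fun _ _ => by ring

theorem LinearIndependent.weight_injective {σ M : Type*} [AddCommMonoid M] {w : σ → M}
    (hw : LinearIndependent ℕ w) : Function.Injective (Finsupp.weight (R := ℕ) w) :=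
  hw

theorem LinearIndependent.smul_of_ne_zero {σ M : Type*} [CommRing M] [IsDomain M] {w : σ → M}
    (hw : LinearIndependent ℕ w) {c : M} (hc : c ≠ 0) : LinearIndependent ℕ (c • w) :=
  fun a b h => hw.weight_injective
    (mul_left_cancel₀ hc (by rw [← Finsupp.weight_smul, ← Finsupp.weight_smul]; exact h))

namespace MvPolynomial

open Finsupp

variable {σ τ R : Type*}

section CommSemiring

variable [CommSemiring R] {w : σ → ℝ} {p : MvPolynomial σ R} {e : σ →₀ ℕ}

/-- `dmax` for arbitrary real weights; a real-valued `weightedTotalDegree'`. -/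
def maxWeight (w : σ → ℝ) (p : MvPolynomial σ R) : ℝ :=
  if h : p.support.Nonempty then p.support.sup' h (weight w) else 0

theorem weight_le_maxWeight (he : e ∈ p.support) : weight w e ≤ maxWeight w p := by
  rw [maxWeight, dif_pos ⟨e, he⟩]
  exact Finset.le_sup' _ he

theorem exists_mem_support_weight_eq_maxWeight (hp : p ≠ 0) :
    ∃ e ∈ p.support, weight w e = maxWeight w p := by
  have hne : p.support.Nonempty := support_nonempty.mpr hp
  obtain ⟨e, he, hsup⟩ := Finset.exists_mem_eq_sup' hne (weight w)
  exact ⟨e, he, by rw [maxWeight, dif_pos hne, hsup]⟩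

theorem maxWeight_eq_weight (he : e ∈ p.support)
    (hmax : ∀ e' ∈ p.support, weight w e' ≤ weight w e) : maxWeight w p = weight w e :=
  le_antisymm (by rw [maxWeight, dif_pos ⟨e, he⟩]; exact Finset.sup'_le _ _ hmax)
    (weight_le_maxWeight he)

theorem maxWeight_monomial {c : R} (hc : c ≠ 0) :
    maxWeight w (monomial e c) = weight w e := by
  classical
  refine maxWeight_eq_weight (by simp [hc]) fun e' he' => ?_
  rw [support_monomial, if_neg hc, Finset.mem_singleton] at he'
  rw [he']

theorem maxWeight_C {c : R} (hc : c ≠ 0) : maxWeight w (C c : MvPolynomial σ R) = 0 := by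
  rw [← monomial_zero', maxWeight_monomial hc, map_zero]

theorem maxWeight_smul {c : ℝ} (hc : 0 ≤ c) (w : σ → ℝ) (p : MvPolynomial σ R) :
    maxWeight (c • w) p = c * maxWeight w p := by
  unfold maxWeight
  split_ifs with hp
  · rw [Finset.apply_sup'_eq_sup'_comp hp (c * ·)
      fun x y => (monotone_mul_left_of_nonneg hc).map_sup x y]
    exact Finset.sup'_congr hp rfl fun e _ => weight_smul c w e
  · rw [mul_zero]

theorem coeff_sum_eq_of_maxWeight_lt {ι : Type*} {s : Finset ι} {T : ι → MvPolynomial σ R}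
    {i₀ : ι} (hlt : ∀ i ∈ s, i ≠ i₀ → maxWeight w (T i) < maxWeight w (T i₀))
    {E : σ →₀ ℕ} (hE : weight w E = maxWeight w (T i₀)) (hi₀ : i₀ ∈ s) :
    coeff E (∑ i ∈ s, T i) = coeff E (T i₀) := by
  rw [coeff_sum]
  refine Finset.sum_eq_single_of_mem i₀ hi₀ fun i hi hne => ?_
  by_contra h
  exact (weight_le_maxWeight (mem_support_iff.mpr h)).not_gt (hE ▸ hlt i hi hne)

theorem sum_ne_zero_of_maxWeight_lt {ι : Type*} {s : Finset ι} {T : ι → MvPolynomial σ R}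
    {i₀ : ι} (hi₀ : i₀ ∈ s) (hT : T i₀ ≠ 0)
    (hlt : ∀ i ∈ s, i ≠ i₀ → maxWeight w (T i) < maxWeight w (T i₀)) : ∑ i ∈ s, T i ≠ 0 := by
  obtain ⟨E, hE, hwE⟩ := exists_mem_support_weight_eq_maxWeight hT
  intro h
  have hcoeff := coeff_sum_eq_of_maxWeight_lt hlt hwE hi₀
  rw [h, coeff_zero] at hcoeff
  exact mem_support_iff.mp hE hcoeff.symm

theorem maxWeight_sum_of_lt {ι : Type*} {s : Finset ι} {T : ι → MvPolynomial σ R}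
    {i₀ : ι} (hi₀ : i₀ ∈ s) (hT : T i₀ ≠ 0)
    (hlt : ∀ i ∈ s, i ≠ i₀ → maxWeight w (T i) < maxWeight w (T i₀)) :
    maxWeight w (∑ i ∈ s, T i) = maxWeight w (T i₀) := by
  classical
  obtain ⟨E, hE, hwE⟩ := exists_mem_support_weight_eq_maxWeight hT
  have hcoeff := coeff_sum_eq_of_maxWeight_lt hlt hwE hi₀
  rw [← hwE]
  refine maxWeight_eq_weight (by rwa [mem_support_iff, hcoeff, ← mem_support_iff]) fun E' hE' => ?_
  obtain ⟨i, hi, hE'i⟩ := Finset.mem_biUnion.mp (support_sum hE')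
  rw [hwE]
  refine (weight_le_maxWeight hE'i).trans ?_
  rcases eq_or_ne i i₀ with rfl | hne
  exacts [le_rfl, (hlt i hi hne).le]

theorem aeval_eq_sum_aeval_monomial (G : τ → MvPolynomial σ R) (f : MvPolynomial τ R) :
    aeval G f = ∑ e ∈ f.support, aeval G (monomial e (coeff e f)) := by
  conv_lhs => rw [← support_sum_monomial_coeff f]
  rw [map_sum]

end CommSemiring

section Domain

variable [CommRing R] [IsDomain R] {w : σ → ℝ} {p q : MvPolynomial σ R}

theorem maxWeight_mul (hw : LinearIndependent ℕ w) (hp : p ≠ 0) (hq : q ≠ 0) :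
    maxWeight w (p * q) = maxWeight w p + maxWeight w q := by
  classical
  obtain ⟨a₀, ha₀, hwa₀⟩ := exists_mem_support_weight_eq_maxWeight (w := w) hp
  obtain ⟨b₀, hb₀, hwb₀⟩ := exists_mem_support_weight_eq_maxWeight (w := w) hq
  have hle : ∀ e ∈ (p * q).support, weight w e ≤ maxWeight w p + maxWeight w q := by
    intro e he
    obtain ⟨a, ha, b, hb, rfl⟩ := Finset.mem_add.mp (support_mul p q he)
    rw [map_add]
    exact add_le_add (weight_le_maxWeight ha) (weight_le_maxWeight hb)
  -- any other splitting `a + b = a₀ + b₀` with nonzero coefficients has `weight a = weight a₀`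
  have hcoeff : coeff (a₀ + b₀) (p * q) = coeff a₀ p * coeff b₀ q := by
    rw [coeff_mul]
    refine Finset.sum_eq_single_of_mem (a₀, b₀) (Finset.HasAntidiagonal.mem_antidiagonal.mpr rfl) ?_
    rintro ⟨a, b⟩ hab hne
    by_contra h
    have ha := weight_le_maxWeight (w := w) (mem_support_iff.mpr (left_ne_zero_of_mul h))
    have hb := weight_le_maxWeight (w := w) (mem_support_iff.mpr (right_ne_zero_of_mul h))
    have hsum : weight w a + weight w b = maxWeight w p + maxWeight w q := by
      rw [← map_add, Finset.HasAntidiagonal.mem_antidiagonal.mp hab, map_add, hwa₀, hwb₀]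
    exact hne (Prod.ext (hw.weight_injective (show weight w a = weight w a₀ by linarith))
      (hw.weight_injective (show weight w b = weight w b₀ by linarith)))
  have hmem : a₀ + b₀ ∈ (p * q).support := by
    rw [mem_support_iff, hcoeff]
    exact mul_ne_zero (mem_support_iff.mp ha₀) (mem_support_iff.mp hb₀)
  rw [maxWeight_eq_weight hmem (by rw [map_add, hwa₀, hwb₀]; exact hle), map_add, hwa₀, hwb₀]

theorem maxWeight_prod (hw : LinearIndependent ℕ w) {s : Finset τ} {P : τ → MvPolynomial σ R}
    (hP : ∀ i ∈ s, P i ≠ 0) : maxWeight w (∏ i ∈ s, P i) = ∑ i ∈ s, maxWeight w (P i) := by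
  induction s using Finset.cons_induction with
  | empty => rw [Finset.prod_empty, Finset.sum_empty, ← C_1, maxWeight_C one_ne_zero]
  | cons a s has ih =>
    have hs : ∀ i ∈ s, P i ≠ 0 := fun i hi => hP i (Finset.mem_cons_of_mem hi)
    rw [Finset.prod_cons, Finset.sum_cons, maxWeight_mul hw (hP a (Finset.mem_cons_self a s))
      (Finset.prod_ne_zero_iff.mpr hs), ih hs]

theorem maxWeight_pow (hw : LinearIndependent ℕ w) (hp : p ≠ 0) (k : ℕ) :
    maxWeight w (p ^ k) = k * maxWeight w p := by
  rw [show p ^ k = ∏ _i ∈ Finset.range k, p by simp, maxWeight_prod hw fun _ _ => hp,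
    Finset.sum_const, Finset.card_range, nsmul_eq_mul]

variable {G : τ → MvPolynomial σ R} {e : τ →₀ ℕ} {c : R}

theorem aeval_monomial_ne_zero (hG : ∀ i, G i ≠ 0) (hc : c ≠ 0) :
    aeval G (monomial e c) ≠ 0 := by
  rw [aeval_monomial, algebraMap_eq, Finsupp.prod]
  exact mul_ne_zero (C_ne_zero.mpr hc) (Finset.prod_ne_zero_iff.mpr fun i _ => pow_ne_zero _ (hG i))

theorem maxWeight_aeval_monomial (hw : LinearIndependent ℕ w) (hG : ∀ i, G i ≠ 0) (hc : c ≠ 0) :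
    maxWeight w (aeval G (monomial e c)) = weight (fun i => maxWeight w (G i)) e := by
  have hprod : (∏ i ∈ e.support, G i ^ e i) ≠ 0 :=
    Finset.prod_ne_zero_iff.mpr fun i _ => pow_ne_zero _ (hG i)
  rw [aeval_monomial, algebraMap_eq, Finsupp.prod, maxWeight_mul hw (C_ne_zero.mpr hc) hprod,
    maxWeight_C hc, zero_add, maxWeight_prod hw fun i _ => pow_ne_zero _ (hG i), weight_apply,
    Finsupp.sum]
  exact Finset.sum_congr rfl fun i _ => by rw [maxWeight_pow hw (hG i), nsmul_eq_mul]

theorem maxWeight_aeval_monomial_lt (hw : LinearIndependent ℕ w)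
    (hv : LinearIndependent ℕ fun i => maxWeight w (G i)) (hG : ∀ i, G i ≠ 0)
    {f : MvPolynomial τ R} {e₀ : τ →₀ ℕ} (he₀ : e₀ ∈ f.support)
    (hmax : weight (fun i => maxWeight w (G i)) e₀ = maxWeight (fun i => maxWeight w (G i)) f) :
    ∀ e ∈ f.support, e ≠ e₀ → maxWeight w (aeval G (monomial e (coeff e f))) <
      maxWeight w (aeval G (monomial e₀ (coeff e₀ f))) := by
  intro e he hne
  rw [maxWeight_aeval_monomial hw hG (mem_support_iff.mp he),
    maxWeight_aeval_monomial hw hG (mem_support_iff.mp he₀), hmax]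
  exact (weight_le_maxWeight he).lt_of_ne (hmax ▸ hv.weight_injective.ne hne)

theorem aeval_ne_zero_of_linearIndependent (hw : LinearIndependent ℕ w)
    (hv : LinearIndependent ℕ fun i => maxWeight w (G i)) (hG : ∀ i, G i ≠ 0)
    {f : MvPolynomial τ R} (hf : f ≠ 0) : aeval G f ≠ 0 := by
  obtain ⟨e₀, he₀, hmax⟩ := exists_mem_support_weight_eq_maxWeight hf
  rw [aeval_eq_sum_aeval_monomial]
  exact sum_ne_zero_of_maxWeight_lt he₀ (aeval_monomial_ne_zero hG (mem_support_iff.mp he₀))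
    (maxWeight_aeval_monomial_lt hw hv hG he₀ hmax)

theorem maxWeight_aeval (hw : LinearIndependent ℕ w)
    (hv : LinearIndependent ℕ fun i => maxWeight w (G i)) (hG : ∀ i, G i ≠ 0)
    {f : MvPolynomial τ R} (hf : f ≠ 0) :
    maxWeight w (aeval G f) = maxWeight (fun i => maxWeight w (G i)) f := by
  obtain ⟨e₀, he₀, hmax⟩ := exists_mem_support_weight_eq_maxWeight hf
  rw [aeval_eq_sum_aeval_monomial, maxWeight_sum_of_lt he₀
    (aeval_monomial_ne_zero hG (mem_support_iff.mp he₀))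
    (maxWeight_aeval_monomial_lt hw hv hG he₀ hmax),
    maxWeight_aeval_monomial hw hG (mem_support_iff.mp he₀), hmax]

end Domain

end MvPolynomial

open Finsupp Function

def powWeight (θ : ℝ) (n : ℕ) (i : Fin n) : ℝ := θ ^ (i : ℕ)

theorem linearIndependent_powWeight {n u : ℕ} (hn : 0 < n)
    (hirr : Irreducible ((Polynomial.X : Polynomial ℚ) ^ n - Polynomial.C (u : ℚ)))
    {θ : ℝ} (hθ : θ ^ n = u) : LinearIndependent ℕ (powWeight θ n) := by
  have hmin : minpoly ℚ θ = Polynomial.X ^ n - Polynomial.C (u : ℚ) :=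
    (minpoly.eq_of_irreducible_of_monic hirr (by simp [hθ])
      (Polynomial.monic_X_pow_sub_C _ hn.ne')).symm
  have hpow := linearIndependent_pow (K := ℚ) θ
  rw [hmin, Polynomial.natDegree_X_pow_sub_C] at hpow
  exact hpow.restrict_scalars' ℕ

theorem wdeg_eq_weight_powWeight (n u : ℕ) :
    wdeg n u = weight (powWeight ((u : ℝ) ^ (n : ℝ)⁻¹) n) := by
  funext e
  rw [wdeg, weight_eq_sum]
  refine Finset.sum_congr rfl fun i _ => ?_
  rw [powWeight, ← Real.rpow_natCast, ← Real.rpow_mul (Nat.cast_nonneg u), inv_mul_eq_div,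
    nsmul_eq_mul]

theorem dmax_eq_maxWeight {F : Type*} [Field F] (n u : ℕ) (f : MvPolynomial (Fin n) F) :
    dmax n u f = maxWeight (powWeight ((u : ℝ) ^ (n : ℝ)⁻¹) n) f := by
  rw [dmax, maxWeight, wdeg_eq_weight_powWeight]

section starP

variable {F : Type*} [Field F] {n u : ℕ} {θ : ℝ}

theorem maxWeight_starP_X (hθ : θ ^ n = u) (i : Fin n) :
    maxWeight (powWeight θ n) (starP F n u (X i)) = θ * powWeight θ n i := by
  rw [starP, aeval_X]
  split_ifs with h
  · rw [X, maxWeight_monomial one_ne_zero, weight_single, powWeight, powWeight, one_smul,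
      pow_succ']
  · rw [X_pow_eq_monomial, maxWeight_monomial one_ne_zero, weight_single, powWeight, powWeight,
      nsmul_eq_mul, ← hθ, Fin.val_mk, pow_zero, mul_one, ← pow_succ',
      show (i : ℕ) + 1 = n by omega]

theorem starP_X_ne_zero (i : Fin n) : starP F n u (X i) ≠ 0 := by
  rw [starP, aeval_X]
  split_ifs
  exacts [X_ne_zero _, pow_ne_zero _ (X_ne_zero _)]

theorem maxWeight_comp_starP_X (hθ : θ ^ n = u) :
    (fun i => maxWeight (powWeight θ n) ((starP F n u ∘ X) i)) = θ • powWeight θ n :=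
  funext (maxWeight_starP_X hθ)

variable (hw : LinearIndependent ℕ (powWeight θ n)) (hθ : θ ^ n = u) (hθpos : 0 < θ)
include hw hθ hθpos

theorem starP_ne_zero {g : MvPolynomial (Fin n) F} (hg : g ≠ 0) : starP F n u g ≠ 0 := by
  rw [aeval_unique (starP F n u)]
  exact aeval_ne_zero_of_linearIndependent (G := starP F n u ∘ X) hw
    (maxWeight_comp_starP_X (F := F) hθ ▸ hw.smul_of_ne_zero hθpos.ne') starP_X_ne_zero hg

theorem maxWeight_starP {g : MvPolynomial (Fin n) F} (hg : g ≠ 0) :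
    maxWeight (powWeight θ n) (starP F n u g) = θ * maxWeight (powWeight θ n) g := by
  rw [aeval_unique (starP F n u), maxWeight_aeval (G := starP F n u ∘ X) hw
    (maxWeight_comp_starP_X (F := F) hθ ▸ hw.smul_of_ne_zero hθpos.ne') starP_X_ne_zero hg,
    maxWeight_comp_starP_X (F := F) hθ, maxWeight_smul hθpos.le]

theorem iterate_starP_ne_zero {g : MvPolynomial (Fin n) F} (hg : g ≠ 0) (k : ℕ) :
    (starP F n u)^[k] g ≠ 0 := by
  induction k with
  | zero => exact hg
  | succ k ih => rw [iterate_succ_apply']; exact starP_ne_zero hw hθ hθpos ih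

theorem maxWeight_iterate_starP {g : MvPolynomial (Fin n) F} (hg : g ≠ 0) (k : ℕ) :
    maxWeight (powWeight θ n) ((starP F n u)^[k] g) = θ ^ k * maxWeight (powWeight θ n) g := by
  induction k with
  | zero => rw [iterate_zero_apply, pow_zero, one_mul]
  | succ k ih =>
    rw [iterate_succ_apply', maxWeight_starP hw hθ hθpos (iterate_starP_ne_zero hw hθ hθpos hg k), ih,
      pow_succ', mul_assoc]

theorem maxWeight_pcompP {f g : MvPolynomial (Fin n) F} (hf : f ≠ 0)
    (hg : 0 < maxWeight (powWeight θ n) g) :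
    maxWeight (powWeight θ n) (pcompP n u f g) =
      maxWeight (powWeight θ n) f * maxWeight (powWeight θ n) g := by
  have hg0 : g ≠ 0 := by
    rintro rfl
    simp [maxWeight] at hg
  have hG : (fun i : Fin n => maxWeight (powWeight θ n) ((starP F n u)^[i] g)) =
      maxWeight (powWeight θ n) g • powWeight θ n :=
    funext fun i => (maxWeight_iterate_starP hw hθ hθpos hg0 i).trans (mul_comm _ _)
  rw [pcompP, maxWeight_aeval (G := fun i : Fin n => (starP F n u)^[i] g) hw
    (hG ▸ hw.smul_of_ne_zero hg.ne') (fun i => iterate_starP_ne_zero hw hθ hθpos hg0 i) hf,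
    hG, maxWeight_smul hg.le, mul_comm]

end starP

theorem dmax_pcomp {F : Type*} [Field F] (n u : ℕ) (hn : 0 < n) (hu : 0 < u)
    (hirr : Irreducible ((Polynomial.X : Polynomial ℚ) ^ n - Polynomial.C (u : ℚ)))
    (f g : MvPolynomial (Fin n) F) (hf : f ≠ 0) (hg : 0 < dmax n u g) :
    dmax n u (pcompP n u f g) = dmax n u f * dmax n u g := by
  have hθ : ((u : ℝ) ^ (n : ℝ)⁻¹) ^ n = u := Real.rpow_inv_natCast_pow (Nat.cast_nonneg u) hn.ne'
  simp only [dmax_eq_maxWeight] at hg ⊢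
  exact maxWeight_pcompP (linearIndependent_powWeight hn hirr hθ) hθ
    (Real.rpow_pos_of_pos (Nat.cast_pos.mpr hu) _) hf hg

end
end

section
/- Let $F$ be a field, $n, u$ positive integers with $x^n - u$ irreducible over $\mathbb{Q}$, and define $d_{\min}$ on nonzero polynomials as the minimum $d$-value of their terms, extended to rational functions by $d_{\min}(f_1/f_2) = d_{\min}(f_1) - d_{\min}(f_2)$. If $f \in F[x_0,\dots,x_{n-1}]$ is nonzero and $g \in F(x_0,\dots,x_{n-1}) \setminus F$ satisfies $d_{\min}(g) < 0$, then $d_{\min}(f \circ g) = d_{\max}(f) \cdot d_{\min}(g)$. -/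
open MvPolynomial

noncomputable section
attribute [local instance] Classical.propDecidable

/-- minimum weighted degree of the terms (junk value `0` for `f = 0`) -/
def dmin {F : Type*} [Field F] (n u : ℕ) (f : MvPolynomial (Fin n) F) : ℝ :=
  if h : f.support.Nonempty then f.support.inf' h (wdeg n u) else 0

abbrev KK (n : ℕ) (F : Type*) [Field F] := FractionRing (MvPolynomial (Fin n) F)

def toKK {n : ℕ} {F : Type*} [Field F] : MvPolynomial (Fin n) F →+* KK n F := algebraMap _ _

def IsStar {F : Type*} [Field F] (n u : ℕ) (σ : KK n F →ₐ[F] KK n F) : Prop :=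
  ∀ i : Fin n, σ (toKK (X i)) =
    toKK (if h : (i : ℕ) + 1 < n then X (⟨(i : ℕ) + 1, h⟩ : Fin n)
          else X (⟨0, i.pos⟩ : Fin n) ^ u)

def pcomp {F : Type*} [Field F] (n : ℕ) (σ : KK n F →ₐ[F] KK n F) (f g : KK n F) : KK n F :=
  if h : Function.Injective
      ((MvPolynomial.aeval (R := F) (fun i : Fin n => (⇑σ)^[(i : ℕ)] g)).toRingHom :
        MvPolynomial (Fin n) F →+* KK n F)
  then IsFractionRing.lift h f else 0

/-! Since `X ^ n - u` is irreducible, `1, r, …, r ^ (n - 1)` with `r = u ^ (1 / n)` are linearly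
independent over `ℚ`, so distinct monomials have distinct weighted degrees. Hence `xᵢ ↦ t ^ (r ^ i)`
embeds `F(x₀, …, xₙ₋₁)` into the field of Hahn series `F⟦ℝ⟧`, turning `dmin` into the order
valuation and `*` into the substitution `t ↦ t ^ r`. So `g^{(i)*}` has order `r ^ i • dmin g`, and
the term `c xᵉ` of `f` contributes to `f ∘ g` a series of order `wdeg e • dmin g`. As `dmin g < 0`
these orders are pairwise distinct and the smallest one comes from the term of largest weighted
degree. -/

open Finsupp (weight)
open HahnSeries (addVal single)

theorem AddValuation.map_prod {ι A Γ₀ : Type*} [CommRing A] [LinearOrderedAddCommMonoidWithTop Γ₀]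
    (v : AddValuation A Γ₀) (s : Finset ι) (f : ι → A) :
    v (∏ i ∈ s, f i) = ∑ i ∈ s, v (f i) := by
  induction s using Finset.cons_induction with
  | empty => simp [v.map_one]
  | cons a s _ ih => rw [Finset.prod_cons, Finset.sum_cons, v.map_mul, ih]

theorem AddValuation.ne_zero_of_eq_coe {A Γ : Type*} [Ring A] [AddCancelCommMonoid Γ]
    [LinearOrder Γ] [IsOrderedAddMonoid Γ] (v : AddValuation A (WithTop Γ)) {x : A} {d : Γ}
    (h : v x = d) : x ≠ 0 := by
  rintro rfl
  exact WithTop.top_ne_coe (v.map_zero ▸ h)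

theorem AddValuation.map_eval₂Hom_eq_weight {σ R A Γ : Type*} [CommRing R] [CommRing A]
    [AddCancelCommMonoid Γ] [LinearOrder Γ] [IsOrderedAddMonoid Γ]
    (v : AddValuation A (WithTop Γ)) {φ : R →+* A} (hφ : ∀ c, c ≠ 0 → v (φ c) = 0)
    {x : σ → A} {t : σ → Γ} (hx : ∀ i, v (x i) = t i)
    {p : MvPolynomial σ R} {e₀ : σ →₀ ℕ} (he₀ : e₀ ∈ p.support)
    (hlt : ∀ e ∈ p.support, e ≠ e₀ → weight t e₀ < weight t e) :
    v (eval₂Hom φ x p) = weight t e₀ := by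
  have hterm : ∀ e ∈ p.support, v (eval₂Hom φ x (monomial e (p.coeff e))) = weight t e := by
    intro e he
    rw [eval₂Hom_monomial, v.map_mul, hφ _ (mem_support_iff.mp he), zero_add, Finsupp.prod,
      v.map_prod, Finsupp.weight_apply, Finsupp.sum, WithTop.coe_sum]
    refine Finset.sum_congr rfl fun i _ => ?_
    rw [v.map_pow, hx, WithTop.coe_nsmul]
  have hrest : (weight t e₀ : WithTop Γ) <
      v (∑ e ∈ p.support.erase e₀, eval₂Hom φ x (monomial e (p.coeff e))) := by
    refine v.map_lt_sum WithTop.coe_ne_top fun e he => ?_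
    rw [hterm e (Finset.mem_of_mem_erase he), WithTop.coe_lt_coe]
    exact hlt e (Finset.mem_of_mem_erase he) (Finset.ne_of_mem_erase he)
  rw [p.as_sum, map_sum, ← Finset.add_sum_erase _ _ he₀,
    v.map_add_eq_of_lt_left (hterm e₀ he₀ ▸ hrest), hterm e₀ he₀]

theorem Finsupp.weight_mul_const {σ : Type*} (w : σ → ℝ) (D : ℝ) (e : σ →₀ ℕ) :
    weight (fun i => w i * D) e = weight w e * D := by
  simp only [Finsupp.weight_apply, Finsupp.sum, Finset.sum_mul, smul_mul_assoc]

namespace HahnSeries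

variable {F : Type*} [Field F] {r : ℝ} (hr : 0 < r)

def scale : HahnSeries ℝ F →+* HahnSeries ℝ F :=
  embDomainRingHom (AddMonoidHom.mulLeft r) (mul_right_injective₀ hr.ne')
    fun _ _ => mul_le_mul_iff_right₀ hr

theorem scale_single (a : ℝ) (c : F) : scale hr (single a c) = single (r * a) c :=
  embDomain_single

theorem scale_C (c : F) : scale hr (C c) = C c :=
  embDomainRingHom_C

theorem addVal_scale (x : HahnSeries ℝ F) :
    addVal ℝ F (scale hr x) = (addVal ℝ F x).map (r * ·) := by
  simp only [addVal_apply]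
  exact orderTop_embDomain

theorem addVal_scale_iterate {x : HahnSeries ℝ F} {d : ℝ} (hx : addVal ℝ F x = d) (i : ℕ) :
    addVal ℝ F ((scale hr)^[i] x) = ↑(r ^ i * d) := by
  induction i with
  | zero => simpa using hx
  | succ i ih =>
    rw [Function.iterate_succ_apply', addVal_scale, ih, WithTop.map_coe, pow_succ', mul_assoc]

theorem addVal_single_one (a : ℝ) : addVal ℝ F (single a 1) = a := by
  rw [addVal_apply, orderTop_single one_ne_zero]

theorem addVal_C {c : F} (hc : c ≠ 0) : addVal ℝ F (C c) = 0 := by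
  rw [addVal_apply_of_ne (C_ne_zero hc), order_C]
  rfl

end HahnSeries

def root (n u : ℕ) : ℝ := (u : ℝ) ^ ((n : ℝ)⁻¹)

theorem root_pos {n u : ℕ} (hu : 0 < u) : 0 < root n u := by unfold root; positivity

theorem root_pow_eq_rpow (n u i : ℕ) : root n u ^ i = (u : ℝ) ^ ((i : ℝ) / n) := by
  rw [root, ← Real.rpow_natCast, ← Real.rpow_mul (Nat.cast_nonneg u), inv_mul_eq_div]

theorem root_pow_self {n : ℕ} (hn : n ≠ 0) (u : ℕ) : root n u ^ n = u := by
  rw [root_pow_eq_rpow, div_self (Nat.cast_ne_zero.mpr hn), Real.rpow_one]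

theorem wdeg_eq_weight (n u : ℕ) : wdeg n u = weight fun i : Fin n => root n u ^ (i : ℕ) := by
  ext e
  simp [wdeg, Finsupp.weight_eq_sum, root_pow_eq_rpow]

theorem minpoly_root {n u : ℕ} (hn : n ≠ 0)
    (hirr : Irreducible ((Polynomial.X : Polynomial ℚ) ^ n - Polynomial.C (u : ℚ))) :
    minpoly ℚ (root n u) = Polynomial.X ^ n - Polynomial.C (u : ℚ) :=
  (minpoly.eq_of_irreducible_of_monic hirr (by simp [root_pow_self hn])
    (Polynomial.monic_X_pow_sub_C _ hn)).symm

theorem wdeg_injective {n u : ℕ} (hn : n ≠ 0)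
    (hirr : Irreducible ((Polynomial.X : Polynomial ℚ) ^ n - Polynomial.C (u : ℚ))) :
    Function.Injective (wdeg n u) := by
  have hli := linearIndependent_pow (K := ℚ) (root n u)
  rw [minpoly_root hn hirr, Polynomial.natDegree_X_pow_sub_C] at hli
  rw [wdeg_eq_weight]
  exact hli.restrict_scalars' ℕ

section Extremal

variable {n u : ℕ} {F : Type*} [Field F] {p : MvPolynomial (Fin n) F}

theorem exists_dmin_eq_wdeg (hinj : Function.Injective (wdeg n u)) (hp : p ≠ 0) :
    ∃ e₀ ∈ p.support, dmin n u p = wdeg n u e₀ ∧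
      ∀ e ∈ p.support, e ≠ e₀ → wdeg n u e₀ < wdeg n u e := by
  have hne := support_nonempty.mpr hp
  obtain ⟨e₀, he₀, hmin⟩ := Finset.exists_mem_eq_inf' hne (wdeg n u)
  refine ⟨e₀, he₀, by rw [dmin, dif_pos hne, hmin], fun e he hne₀ => ?_⟩
  exact (hmin ▸ Finset.inf'_le _ he).lt_of_ne (hinj.ne hne₀).symm

theorem exists_dmax_eq_wdeg (hinj : Function.Injective (wdeg n u)) (hp : p ≠ 0) :
    ∃ e₀ ∈ p.support, dmax n u p = wdeg n u e₀ ∧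
      ∀ e ∈ p.support, e ≠ e₀ → wdeg n u e < wdeg n u e₀ := by
  have hne := support_nonempty.mpr hp
  obtain ⟨e₀, he₀, hmax⟩ := Finset.exists_mem_eq_sup' hne (wdeg n u)
  refine ⟨e₀, he₀, by rw [dmax, dif_pos hne, hmax], fun e he hne₀ => ?_⟩
  exact (hmax ▸ Finset.le_sup' _ he).lt_of_ne (hinj.ne hne₀)

end Extremal

section Embedding

variable {n u : ℕ} {F : Type*} [Field F]

variable (n u F) in
def toHahn : MvPolynomial (Fin n) F →+* HahnSeries ℝ F :=
  eval₂Hom HahnSeries.C fun i => single (root n u ^ (i : ℕ)) 1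

theorem addVal_toHahn (hinj : Function.Injective (wdeg n u)) {p : MvPolynomial (Fin n) F}
    (hp : p ≠ 0) : addVal ℝ F (toHahn n u F p) = dmin n u p := by
  obtain ⟨e₀, he₀, hmin, hlt⟩ := exists_dmin_eq_wdeg hinj hp
  rw [wdeg_eq_weight] at hmin hlt
  rw [hmin]
  exact (addVal ℝ F).map_eval₂Hom_eq_weight (fun _ => HahnSeries.addVal_C)
    (fun _ => HahnSeries.addVal_single_one _) he₀ hlt

theorem toHahn_injective (hinj : Function.Injective (wdeg n u)) :
    Function.Injective (toHahn n u F) := by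
  refine (injective_iff_map_eq_zero _).mpr fun p hp0 => by_contra fun hp => ?_
  exact (addVal ℝ F).ne_zero_of_eq_coe (addVal_toHahn hinj hp) hp0

def fracToHahn (hinj : Function.Injective (wdeg n u)) : KK n F →+* HahnSeries ℝ F :=
  IsFractionRing.lift (toHahn_injective hinj)

variable (hinj : Function.Injective (wdeg n u))

theorem fracToHahn_toKK (p : MvPolynomial (Fin n) F) :
    fracToHahn hinj (toKK p) = toHahn n u F p :=
  IsFractionRing.lift_algebraMap _ _

theorem algebraMap_eq_toKK_C (c : F) : algebraMap F (KK n F) c = toKK (C c) :=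
  IsScalarTower.algebraMap_apply F (MvPolynomial (Fin n) F) (KK n F) c

theorem fracToHahn_algebraMap (c : F) :
    fracToHahn hinj (algebraMap F (KK n F) c) = HahnSeries.C c := by
  rw [algebraMap_eq_toKK_C, fracToHahn_toKK, toHahn, eval₂Hom_C]

theorem addVal_fracToHahn_div {p q : MvPolynomial (Fin n) F} (hp : p ≠ 0) (hq : q ≠ 0) :
    addVal ℝ F (fracToHahn hinj (toKK p / toKK q)) = ↑(dmin n u p - dmin n u q) := by
  rw [map_div₀, (addVal ℝ F).map_div, fracToHahn_toKK, fracToHahn_toKK, addVal_toHahn hinj hp,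
    addVal_toHahn hinj hq, WithTop.LinearOrderedAddCommGroup.coe_sub]

theorem toHahn_star_X (hu : 0 < u) (i : Fin n) :
    toHahn n u F (if h : (i : ℕ) + 1 < n then X (⟨(i : ℕ) + 1, h⟩ : Fin n)
      else X (⟨0, i.pos⟩ : Fin n) ^ u) =
    HahnSeries.scale (root_pos (n := n) hu) (toHahn n u F (X i)) := by
  simp only [toHahn, apply_dite, map_pow, eval₂Hom_X', HahnSeries.scale_single]
  split_ifs with h
  · rw [pow_succ']
  · have hn : (i : ℕ) + 1 = n := by omega
    rw [HahnSeries.single_pow, one_pow, ← pow_succ', hn, root_pow_self (by omega), pow_zero,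
      nsmul_one]

theorem fracToHahn_semiconj (hu : 0 < u) {σ : KK n F →ₐ[F] KK n F} (hσ : IsStar n u σ) :
    Function.Semiconj (fracToHahn hinj) σ (HahnSeries.scale (root_pos (n := n) hu)) := by
  suffices h : (fracToHahn hinj).comp (σ : KK n F →+* KK n F) =
      (HahnSeries.scale (root_pos hu)).comp (fracToHahn hinj) from fun x => RingHom.congr_fun h x
  refine IsFractionRing.ringHom_ext (A := MvPolynomial (Fin n) F) fun p => ?_
  change fracToHahn hinj (σ (toKK p)) = HahnSeries.scale (root_pos hu) (fracToHahn hinj (toKK p))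
  rw [fracToHahn_toKK]
  suffices h : ((fracToHahn hinj).comp (σ : KK n F →+* KK n F)).comp toKK =
      (HahnSeries.scale (root_pos hu)).comp (toHahn n u F) from RingHom.congr_fun h p
  refine MvPolynomial.ringHom_ext (fun c => ?_) (fun i => ?_)
  · simp only [RingHom.comp_apply, RingHom.coe_coe, ← algebraMap_eq_toKK_C, AlgHom.commutes,
      fracToHahn_algebraMap, toHahn, eval₂Hom_C, HahnSeries.scale_C]
  · simp only [RingHom.comp_apply, RingHom.coe_coe, hσ i, fracToHahn_toKK, toHahn_star_X hu]

theorem addVal_fracToHahn_aeval_iterate (hu : 0 < u) {σ : KK n F →ₐ[F] KK n F}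
    (hσ : IsStar n u σ) {g : KK n F} {D : ℝ} (hg : addVal ℝ F (fracToHahn hinj g) = D)
    (hD : D < 0) {p : MvPolynomial (Fin n) F} (hp : p ≠ 0) :
    addVal ℝ F (fracToHahn hinj (aeval (fun i : Fin n => (⇑σ)^[(i : ℕ)] g) p)) =
      ↑(dmax n u p * D) := by
  obtain ⟨e₀, he₀, hmax, hlt⟩ := exists_dmax_eq_wdeg hinj hp
  have hpts (i : Fin n) : addVal ℝ F (fracToHahn hinj ((⇑σ)^[(i : ℕ)] g)) =
      ↑(root n u ^ (i : ℕ) * D) := by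
    rw [((fracToHahn_semiconj hinj hu hσ).iterate_right _) g]
    exact HahnSeries.addVal_scale_iterate _ hg _
  rw [map_aeval, hmax, wdeg_eq_weight, ← Finsupp.weight_mul_const]
  refine (addVal ℝ F).map_eval₂Hom_eq_weight (fun c hc => ?_) hpts he₀ fun e he hne => ?_
  · rw [RingHom.comp_apply, fracToHahn_algebraMap, HahnSeries.addVal_C hc]
  · rw [Finsupp.weight_mul_const, Finsupp.weight_mul_const, ← wdeg_eq_weight]
    exact mul_lt_mul_of_neg_right (hlt e he hne) hD

end Embedding

theorem pcomp_toKK {n : ℕ} {F : Type*} [Field F] {σ : KK n F →ₐ[F] KK n F} {g : KK n F}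
    (hg : Function.Injective (aeval (R := F) fun i : Fin n => (⇑σ)^[(i : ℕ)] g))
    (f : MvPolynomial (Fin n) F) :
    pcomp n σ (toKK f) g = aeval (fun i : Fin n => (⇑σ)^[(i : ℕ)] g) f := by
  rw [pcomp, dif_pos (by exact hg)]
  exact IsFractionRing.lift_algebraMap _ f

theorem dmin_pcomp_general {F : Type*} [Field F] (n u : ℕ) (hn : 0 < n) (hu : 0 < u)
    (hirr : Irreducible ((Polynomial.X : Polynomial ℚ) ^ n - Polynomial.C (u : ℚ)))
    (σ : KK n F →ₐ[F] KK n F) (hσ : IsStar n u σ)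
    (f : MvPolynomial (Fin n) F) (hf : f ≠ 0)
    (g1 g2 : MvPolynomial (Fin n) F) (hg1 : g1 ≠ 0) (hg2 : g2 ≠ 0)
    (hneg : dmin n u g1 - dmin n u g2 < 0)
    (h1 h2 : MvPolynomial (Fin n) F) (hh2 : h2 ≠ 0)
    (hrep : pcomp n σ (toKK f) (toKK g1 / toKK g2) = toKK h1 / toKK h2) :
    dmin n u h1 - dmin n u h2 = dmax n u f * (dmin n u g1 - dmin n u g2) := by
  have hinj := wdeg_injective hn.ne' hirr
  have hval {p : MvPolynomial (Fin n) F} (hp : p ≠ 0) := addVal_fracToHahn_aeval_iterate hinj hu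
    hσ (addVal_fracToHahn_div hinj hg1 hg2) hneg hp
  have hev : Function.Injective (aeval (R := F)
      fun i : Fin n => (⇑σ)^[(i : ℕ)] (toKK g1 / toKK g2)) := by
    refine (injective_iff_map_eq_zero _).mpr fun p hp0 => by_contra fun hp => ?_
    exact (addVal ℝ F).ne_zero_of_eq_coe (hval hp) (by rw [hp0, map_zero])
  rw [pcomp_toKK hev] at hrep
  have hf' := hval hf
  have hh1 : h1 ≠ 0 := by
    rintro rfl
    exact (addVal ℝ F).ne_zero_of_eq_coe hf' (by rw [hrep, map_zero, zero_div, map_zero])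
  rw [hrep, addVal_fracToHahn_div hinj hh1 hh2] at hf'
  exact WithTop.coe_injective hf'

set_option maxHeartbeats 1000000 in
theorem dmin_pcomp {F : Type*} [Field F] (n u : ℕ) (hn : 0 < n) (hu : 0 < u)
    (hirr : Irreducible ((Polynomial.X : Polynomial ℚ) ^ n - Polynomial.C (u : ℚ)))
    (σ : KK n F →ₐ[F] KK n F) (hσ : IsStar n u σ)
    (f : MvPolynomial (Fin n) F) (hf : f ≠ 0)
    (g1 g2 : MvPolynomial (Fin n) F) (hg1 : g1 ≠ 0) (hg2 : g2 ≠ 0)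
    (hgc : toKK g1 / toKK g2 ∉ Set.range (algebraMap F (KK n F)))
    (hneg : dmin n u g1 - dmin n u g2 < 0)
    (h1 h2 : MvPolynomial (Fin n) F) (hh2 : h2 ≠ 0)
    (hrep : pcomp n σ (toKK f) (toKK g1 / toKK g2) = toKK h1 / toKK h2) :
    dmin n u h1 - dmin n u h2 = dmax n u f * (dmin n u g1 - dmin n u g2) :=
  dmin_pcomp_general n u hn hu hirr σ hσ f hf g1 g2 hg1 hg2 hneg h1 h2 hh2 hrep
end
end

section
/- The map $\gamma: \mathcal{G}(n,q) \to \mathrm{Cr}_n(\mathbb{F}_q) = \mathrm{Aut}(\mathbb{F}_q(x_0,\dots,x_{n-1})/\mathbb{F}_q)$ sending $f$ to the automorphism $h \mapsto h \circ f^{(-1)}$ is an injective group homomorphism. -/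
open MvPolynomial

noncomputable section
attribute [local instance] Classical.propDecidable

def X0K {F : Type*} [Field F] {n : ℕ} (hn : 0 < n) : KK n F := toKK (X (⟨0, hn⟩ : Fin n))

/-- `fi` is the compositional inverse of the global 𝒫-form `f`. -/
def InvPair {F : Type*} [Field F] {n : ℕ} (σ : KK n F →ₐ[F] KK n F) (hn : 0 < n)
    (f fi : KK n F) : Prop :=
  f ∉ Set.range (algebraMap F (KK n F)) ∧ fi ∉ Set.range (algebraMap F (KK n F)) ∧
    pcomp n σ fi f = X0K hn ∧ pcomp n σ f fi = X0K hn

set_option maxHeartbeats 1000000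
namespace CremonaAux

variable {F : Type*} [Field F] {n : ℕ}

def phi (σ : KK n F →ₐ[F] KK n F) (a : KK n F) : MvPolynomial (Fin n) F →+* KK n F :=
  ((MvPolynomial.aeval (R := F) (fun i : Fin n => (⇑σ)^[(i : ℕ)] a)).toRingHom :
      MvPolynomial (Fin n) F →+* KK n F)

lemma pcomp_def (σ : KK n F →ₐ[F] KK n F) (f g : KK n F) :
    pcomp n σ f g =
      if h : Function.Injective (phi σ g) then IsFractionRing.lift h f else 0 := rfl

lemma phi_C (σ : KK n F →ₐ[F] KK n F) (a : KK n F) (c : F) :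
    phi σ a (C c) = algebraMap F (KK n F) c := by simp [phi]

lemma phi_X (σ : KK n F →ₐ[F] KK n F) (a : KK n F) (i : Fin n) :
    phi σ a (X i) = (⇑σ)^[(i : ℕ)] a := by simp [phi]

lemma toKK_C (c : F) : (toKK (C c) : KK n F) = algebraMap F (KK n F) c := by
  rw [toKK, IsScalarTower.algebraMap_apply F (MvPolynomial (Fin n) F) (KK n F) c,
    MvPolynomial.algebraMap_eq]

lemma K_ext {f g : KK n F →+* KK n F} (h : ∀ P, f (toKK P) = g (toKK P)) : f = g :=
  IsLocalization.ringHom_ext (nonZeroDivisors (MvPolynomial (Fin n) F)) (RingHom.ext h)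

lemma lift_toKK {σ : KK n F →ₐ[F] KK n F} {a : KK n F}
    (h : Function.Injective (phi σ a)) (P : MvPolynomial (Fin n) F) :
    IsFractionRing.lift h (toKK P) = phi σ a P :=
  IsFractionRing.lift_algebraMap h P

lemma iter_algebraMap (σ : KK n F →ₐ[F] KK n F) (k : ℕ) (c : F) :
    (⇑σ)^[k] (algebraMap F (KK n F) c) = algebraMap F (KK n F) c := by
  induction k with
  | zero => rfl
  | succ k ih => rw [Function.iterate_succ_apply', ih, AlgHom.commutes]

lemma iter_map_pow (σ : KK n F →ₐ[F] KK n F) (m q : ℕ) (x : KK n F) :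
    (⇑σ)^[m] (x ^ q) = ((⇑σ)^[m] x) ^ q := by
  induction m with
  | zero => rfl
  | succ m ih => rw [Function.iterate_succ_apply', Function.iterate_succ_apply', ih, map_pow]

variable [Fintype F]

lemma sig_iter_X (σ : KK n F →ₐ[F] KK n F) (hσ : IsStar n (Fintype.card F) σ) :
    ∀ (k : ℕ) (i : Fin n) (h : (i : ℕ) + k < n),
      (⇑σ)^[k] (toKK (X i)) = toKK (X (⟨(i : ℕ) + k, h⟩ : Fin n)) := by
  intro k
  induction k with
  | zero =>
    intro i h
    simp only [Function.iterate_zero, id_eq]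
    congr 1
  | succ k ih =>
    intro i h
    have h1 : (i : ℕ) + 1 < n := by omega
    rw [Function.iterate_succ_apply, hσ i, dif_pos h1]
    have h2 : ((⟨(i : ℕ) + 1, h1⟩ : Fin n) : ℕ) + k < n := by simpa using (by omega : (i:ℕ)+1+k < n)
    rw [ih ⟨(i : ℕ) + 1, h1⟩ h2]
    have : (⟨((⟨(i : ℕ) + 1, h1⟩ : Fin n) : ℕ) + k, h2⟩ : Fin n) = ⟨(i : ℕ) + (k + 1), h⟩ := by
      apply Fin.ext
      simp only [Fin.val_mk]
      omega
    rw [this]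

lemma charF (p s : ℕ) (hp : p.Prime) (hcard : Fintype.card F = p ^ s) : CharP F p := by
  have h1 : CharP F (ringChar F) := ringChar.charP F
  have hprime : (ringChar F).Prime := CharP.char_is_prime F (ringChar F)
  have hdvd : ringChar F ∣ p ^ s := by
    rw [← hcard]
    exact (CharP.cast_eq_zero_iff F (ringChar F) (Fintype.card F)).mp
      (FiniteField.cast_card_eq_zero F)
  have : ringChar F = p :=
    (Nat.prime_dvd_prime_iff_eq hprime hp).mp (hprime.dvd_of_dvd_pow hdvd)
  rwa [this] at h1

lemma sig_pow_card (p s : ℕ) (hp : p.Prime) (hcard : Fintype.card F = p ^ s)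
    (hn : 0 < n) (σ : KK n F →ₐ[F] KK n F) (hσ : IsStar n (Fintype.card F) σ) (x : KK n F) :
    (⇑σ)^[n] x = x ^ Fintype.card F := by
  haveI : CharP F p := charF p s hp hcard
  haveI : CharP (KK n F) p :=
    charP_of_injective_algebraMap (algebraMap F (KK n F)).injective p
  haveI : Fact p.Prime := ⟨hp⟩
  have key : σ.toRingHom ^ n = iterateFrobenius (KK n F) p s := by
    apply K_ext
    intro P
    rw [show ((σ.toRingHom ^ n) (toKK P) = iterateFrobenius (KK n F) p s (toKK P)) =
        (((σ.toRingHom ^ n).comp toKK) P = ((iterateFrobenius (KK n F) p s).comp toKK) P)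
      from rfl]
    refine congrFun (congrArg _ (MvPolynomial.ringHom_ext ?_ ?_)) P
    · intro c
      simp only [RingHom.comp_apply, toKK_C, RingHom.coe_pow, iterateFrobenius_def]
      rw [show ⇑σ.toRingHom = ⇑σ from rfl, iter_algebraMap, ← map_pow, ← hcard,
        FiniteField.pow_card]
    · intro i
      simp only [RingHom.comp_apply, RingHom.coe_pow, iterateFrobenius_def]
      rw [show ⇑σ.toRingHom = ⇑σ from rfl, ← hcard]
      -- goal: (⇑σ)^[n] (toKK (X i)) = toKK (X i) ^ Fintype.card F
      have hi : (i : ℕ) < n := i.isLt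
      set m := n - 1 - (i : ℕ) with hm
      have d : (⇑σ)^[n] (toKK (X i)) = (⇑σ)^[(i : ℕ)] ((⇑σ)^[1 + m] (toKK (X i))) := by
        rw [← Function.iterate_add_apply]
        congr 1
        omega
      rw [d, Function.iterate_add_apply, Function.iterate_one]
      rw [sig_iter_X σ hσ m i (by omega)]
      rw [hσ ⟨(i : ℕ) + m, by omega⟩]
      rw [dif_neg (show ¬ ((⟨(i : ℕ) + m, by omega⟩ : Fin n) : ℕ) + 1 < n from by
        show ¬ ((i : ℕ) + m + 1 < n); omega)]
      rw [map_pow, iter_map_pow]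
      rw [sig_iter_X σ hσ (i : ℕ) ⟨0, hn⟩ (by show (0 : ℕ) + (i : ℕ) < n; omega)]
      have : (⟨(0 : ℕ) + (i : ℕ), by omega⟩ : Fin n) = i := by
        apply Fin.ext
        simp only [Fin.val_mk]
        omega
      rw [this]
  have := congrFun (congrArg (fun f : KK n F →+* KK n F => ⇑f) key) x
  simpa [iterateFrobenius_def, ← hcard] using this



lemma K_ext' {f g : KK n F →+* KK n F}
    (hC : ∀ c : F, f (toKK (C c)) = g (toKK (C c)))
    (hX : ∀ i : Fin n, f (toKK (X i)) = g (toKK (X i))) : f = g :=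
  IsLocalization.ringHom_ext (nonZeroDivisors (MvPolynomial (Fin n) F))
    (MvPolynomial.ringHom_ext hC hX)

lemma lift_comm_sigma (p s : ℕ) (hp : p.Prime) (hcard : Fintype.card F = p ^ s) (hn : 0 < n)
    (σ : KK n F →ₐ[F] KK n F) (hσ : IsStar n (Fintype.card F) σ)
    {a : KK n F} (h : Function.Injective (phi σ a)) (x : KK n F) :
    IsFractionRing.lift h (σ x) = σ (IsFractionRing.lift h x) := by
  have key : (IsFractionRing.lift h).comp σ.toRingHom
      = σ.toRingHom.comp (IsFractionRing.lift h) := by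
    apply K_ext'
    · intro c
      simp only [RingHom.comp_apply]
      rw [show (σ.toRingHom : KK n F → KK n F) = ⇑σ from rfl, toKK_C, AlgHom.commutes,
        show algebraMap F (KK n F) c = toKK (C c) from (toKK_C c).symm, lift_toKK, phi_C,
        AlgHom.commutes]
    · intro i
      simp only [RingHom.comp_apply]
      rw [show (σ.toRingHom : KK n F → KK n F) = ⇑σ from rfl, lift_toKK, phi_X, hσ i,
        lift_toKK]
      by_cases h1 : (i : ℕ) + 1 < n
      · rw [dif_pos h1, phi_X]
        show (⇑σ)^[(i : ℕ) + 1] a = σ ((⇑σ)^[(i : ℕ)] a)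
        rw [Function.iterate_succ_apply']
      · rw [dif_neg h1, map_pow, phi_X]
        simp only [Function.iterate_zero, id_eq]
        rw [← Function.iterate_succ_apply' (⇑σ) (i : ℕ) a]
        have hin : Nat.succ (i : ℕ) = n := by have := i.isLt; omega
        rw [hin, sig_pow_card p s hp hcard hn σ hσ]
  exact RingHom.congr_fun key x

lemma lift_comm_iter (p s : ℕ) (hp : p.Prime) (hcard : Fintype.card F = p ^ s) (hn : 0 < n)
    (σ : KK n F →ₐ[F] KK n F) (hσ : IsStar n (Fintype.card F) σ)
    {a : KK n F} (h : Function.Injective (phi σ a)) (k : ℕ) (x : KK n F) :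
    IsFractionRing.lift h ((⇑σ)^[k] x) = (⇑σ)^[k] (IsFractionRing.lift h x) := by
  induction k with
  | zero => rfl
  | succ k ih =>
    rw [Function.iterate_succ_apply', Function.iterate_succ_apply',
      lift_comm_sigma p s hp hcard hn σ hσ, ih]

lemma phi_lift (p s : ℕ) (hp : p.Prime) (hcard : Fintype.card F = p ^ s) (hn : 0 < n)
    (σ : KK n F →ₐ[F] KK n F) (hσ : IsStar n (Fintype.card F) σ)
    {a : KK n F} (ha : Function.Injective (phi σ a)) (b : KK n F) :
    phi σ (IsFractionRing.lift (K := KK n F) ha b) = (IsFractionRing.lift (K := KK n F) ha).comp (phi σ b) := by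
  apply MvPolynomial.ringHom_ext
  · intro c
    rw [phi_C, RingHom.comp_apply, phi_C,
      show algebraMap F (KK n F) c = toKK (C c) from (toKK_C c).symm, lift_toKK, phi_C]
    rw [toKK_C]
  · intro i
    rw [phi_X, RingHom.comp_apply, phi_X, lift_comm_iter p s hp hcard hn σ hσ]

lemma inj_lift (p s : ℕ) (hp : p.Prime) (hcard : Fintype.card F = p ^ s) (hn : 0 < n)
    (σ : KK n F →ₐ[F] KK n F) (hσ : IsStar n (Fintype.card F) σ)
    {a b : KK n F} (ha : Function.Injective (phi σ a))
    (hb : Function.Injective (phi σ b)) :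
    Function.Injective (phi σ (IsFractionRing.lift (K := KK n F) ha b)) := by
  rw [phi_lift p s hp hcard hn σ hσ, RingHom.coe_comp]
  exact (IsFractionRing.lift ha).injective.comp hb

lemma lift_lift (p s : ℕ) (hp : p.Prime) (hcard : Fintype.card F = p ^ s) (hn : 0 < n)
    (σ : KK n F →ₐ[F] KK n F) (hσ : IsStar n (Fintype.card F) σ)
    {a b : KK n F} (ha : Function.Injective (phi σ a))
    (hb : Function.Injective (phi σ b))
    (hc : Function.Injective (phi σ (IsFractionRing.lift (K := KK n F) ha b))) (x : KK n F) :
    IsFractionRing.lift hc x = IsFractionRing.lift ha (IsFractionRing.lift (K := KK n F) hb x) := by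
  have key : IsFractionRing.lift (K := KK n F) hc
      = (IsFractionRing.lift ha).comp (IsFractionRing.lift (K := KK n F) hb) := by
    apply K_ext
    intro P
    rw [lift_toKK, RingHom.comp_apply, lift_toKK, phi_lift p s hp hcard hn σ hσ,
      RingHom.comp_apply]
  exact RingHom.congr_fun key x

lemma phi_X0 (hn : 0 < n) (σ : KK n F →ₐ[F] KK n F) (hσ : IsStar n (Fintype.card F) σ) :
    phi σ (X0K hn : KK n F) = toKK := by
  apply MvPolynomial.ringHom_ext
  · intro c
    rw [phi_C, toKK_C]
  · intro i
    rw [phi_X, X0K, sig_iter_X σ hσ (i : ℕ) ⟨0, hn⟩ (by show (0:ℕ) + (i:ℕ) < n; omega)]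
    have : (⟨(0 : ℕ) + (i : ℕ), by omega⟩ : Fin n) = i := by
      apply Fin.ext
      simp only [Fin.val_mk]
      omega
    rw [this]

lemma lift_eq_id (hn : 0 < n) (σ : KK n F →ₐ[F] KK n F) (hσ : IsStar n (Fintype.card F) σ)
    {c : KK n F} (hc : Function.Injective (phi σ c)) (hcx : c = X0K hn)
    (x : KK n F) : IsFractionRing.lift hc x = x := by
  subst hcx
  have key : IsFractionRing.lift hc = RingHom.id (KK n F) := by
    apply K_ext
    intro P
    rw [lift_toKK, phi_X0 hn σ hσ, RingHom.id_apply]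
  exact RingHom.congr_fun key x

omit [Fintype F] in
lemma X0_ne_zero (hn : 0 < n) : (X0K hn : KK n F) ≠ 0 := by
  rw [X0K]
  exact (map_ne_zero_iff toKK
    (IsFractionRing.injective (MvPolynomial (Fin n) F) (KK n F))).mpr (X_ne_zero _)

omit [Fintype F] in
lemma invpair_inj (hn : 0 < n) (σ : KK n F →ₐ[F] KK n F)
    {f fi : KK n F} (hfp : InvPair σ hn f fi) :
    Function.Injective (phi σ f) ∧ Function.Injective (phi σ fi) := by
  obtain ⟨-, -, h1, h2⟩ := hfp
  rw [pcomp_def] at h1 h2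
  constructor
  · by_contra hc
    rw [dif_neg hc] at h1
    exact X0_ne_zero hn h1.symm
  · by_contra hc
    rw [dif_neg hc] at h2
    exact X0_ne_zero hn h2.symm

end CremonaAux

set_option synthInstance.maxHeartbeats 400000 in
/-- The map `γ : 𝒢(n,q) → Cr_n(𝔽_q)`, `γ(f)(h) = h ∘ f⁻¹`, is an injective group homomorphism:
(a) each `γ(f)` is an `𝔽_q`-automorphism of `𝔽_q(x₀,…,x_{n-1})`;
(b) `γ(f ∘ g) = γ(f)γ(g)` (note `(f ∘ g)⁻¹ = g⁻¹ ∘ f⁻¹`);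
(c) `γ` is injective. -/
theorem cremona_embedding {F : Type*} [Field F] [Fintype F] (p s n : ℕ) (hp : p.Prime)
    (hcard : Fintype.card F = p ^ s) (hn : 0 < n) (hgcd : Nat.gcd n s = 1)
    (σ : KK n F →ₐ[F] KK n F) (hσ : IsStar n (Fintype.card F) σ) :
    (∀ f fi : KK n F, InvPair σ hn f fi →
      ∃ e : KK n F ≃ₐ[F] KK n F, ∀ h : KK n F, e h = pcomp n σ h fi) ∧
    (∀ f fi g gi : KK n F, InvPair σ hn f fi → InvPair σ hn g gi →
      ∀ h : KK n F, pcomp n σ (pcomp n σ h gi) fi = pcomp n σ h (pcomp n σ gi fi)) ∧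
    (∀ f fi g gi : KK n F, InvPair σ hn f fi → InvPair σ hn g gi →
      (∀ h : KK n F, pcomp n σ h fi = pcomp n σ h gi) → f = g) := by
  classical
  refine ⟨?_, ?_, ?_⟩
  · rintro f fi hpair
    obtain ⟨hf, hfi⟩ := CremonaAux.invpair_inj hn σ hpair
    have h1 : IsFractionRing.lift hf fi = X0K hn := by
      have := hpair.2.2.1
      rwa [CremonaAux.pcomp_def, dif_pos hf] at this
    have h2 : IsFractionRing.lift hfi f = X0K hn := by
      have := hpair.2.2.2
      rwa [CremonaAux.pcomp_def, dif_pos hfi] at this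
    have hc1 := CremonaAux.inj_lift p s hp hcard hn σ hσ hf hfi
    have hc2 := CremonaAux.inj_lift p s hp hcard hn σ hσ hfi hf
    have left : ∀ x, IsFractionRing.lift hf (IsFractionRing.lift (K := KK n F) hfi x) = x := by
      intro x
      rw [← CremonaAux.lift_lift p s hp hcard hn σ hσ hf hfi hc1 x]
      exact CremonaAux.lift_eq_id hn σ hσ hc1 h1 x
    have right : ∀ x, IsFractionRing.lift hfi (IsFractionRing.lift (K := KK n F) hf x) = x := by
      intro x
      rw [← CremonaAux.lift_lift p s hp hcard hn σ hσ hfi hf hc2 x]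
      exact CremonaAux.lift_eq_id hn σ hσ hc2 h2 x
    refine ⟨{ toFun := IsFractionRing.lift hfi, invFun := IsFractionRing.lift hf,
              left_inv := left, right_inv := right,
              map_mul' := map_mul (IsFractionRing.lift (K := KK n F) hfi),
              map_add' := map_add (IsFractionRing.lift (K := KK n F) hfi),
              commutes' := ?_ }, ?_⟩
    · intro c
      show IsFractionRing.lift hfi (algebraMap F (KK n F) c) = algebraMap F (KK n F) c
      rw [← CremonaAux.toKK_C, CremonaAux.lift_toKK, CremonaAux.phi_C, CremonaAux.toKK_C]
    · intro h
      rw [CremonaAux.pcomp_def, dif_pos hfi]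
      rfl
  · rintro f fi g gi hfp hgp h
    obtain ⟨hf, hfi⟩ := CremonaAux.invpair_inj hn σ hfp
    obtain ⟨hg, hgi⟩ := CremonaAux.invpair_inj hn σ hgp
    have hc : Function.Injective
        (CremonaAux.phi σ (IsFractionRing.lift (K := KK n F) hfi gi)) :=
      CremonaAux.inj_lift p s hp hcard hn σ hσ hfi hgi
    rw [show pcomp n σ h gi = IsFractionRing.lift hgi h from by
      rw [CremonaAux.pcomp_def, dif_pos hgi]]
    rw [show pcomp n σ gi fi = IsFractionRing.lift hfi gi from by
      rw [CremonaAux.pcomp_def, dif_pos hfi]]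
    rw [CremonaAux.pcomp_def, dif_pos hfi]
    rw [CremonaAux.pcomp_def, dif_pos hc]
    exact (CremonaAux.lift_lift p s hp hcard hn σ hσ hfi hgi hc h).symm
  · rintro f fi g gi hfp hgp hyp
    obtain ⟨-, hgi⟩ := CremonaAux.invpair_inj hn σ hgp
    have e1 : pcomp n σ f gi = X0K hn := by rw [← hyp f]; exact hfp.2.2.2
    have e2 : pcomp n σ g gi = X0K hn := hgp.2.2.2
    rw [CremonaAux.pcomp_def, dif_pos hgi] at e1 e2
    exact (IsFractionRing.lift (K := KK n F) hgi).injective (e1.trans e2.symm)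


end
end
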